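/- Let p be a prime and n ≥ 1, and let the Heisenberg group G(p,n) of matrices A(x,y,z) act on (ℤ/pℤ)^{n+2} by matrix-vector multiplication. Then: (1) there exist vectors v₁, …, v_{n+1} ∈ (ℤ/pℤ)^{n+2} such that the only (x,y,z) with A(x,y,z)·vⱼ = vⱼ for all j = 1,…,n+1 is (x,y,z) = (0,0,0); and (2) for any vectors v₁, …, vₙ ∈ (ℤ/pℤ)^{n+2} there exists (x,y,z) ≠ (0,0,0) with A(x,y,z)·vⱼ = vⱼ for all j = 1,…,n. In other words, the minimal base size of this permutation action is n+1. -/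

import Mathlib

/-! In coordinates `0, …, n+1`, the matrix `A(x,y,z)` fixes `v` exactly when
`(x,z) · (v₁,…,v_{n+1}) = 0` and `y · v_{n+1} = 0`. The basis vectors `e₁,…,e_{n+1}` therefore
force `x`, `z` and (through `e_{n+1}`) `y` to vanish, whereas `n` vectors impose only `n`
linear conditions on `(x,z) ∈ 𝔽_p^{n+1}`, which have a nonzero solution, taken with `y = 0`. -/

/-- The Heisenberg matrix `A(x,y,z)`: the `(n+2) × (n+2)` matrix over `ℤ/pℤ` with `1`'s on
the main diagonal, first row `(1, x₁, …, xₙ, z)`, last column `(z, y₁, …, yₙ, 1)ᵀ`, and all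
other entries `0`. -/
def heis (p n : ℕ) (x y : Fin n → ZMod p) (z : ZMod p) :
    Matrix (Fin (n + 2)) (Fin (n + 2)) (ZMod p) :=
  Matrix.of fun i j =>
    if i = j then 1
    else if i.val = 0 ∧ j.val = n + 1 then z
    else if h : i.val = 0 ∧ j.val - 1 < n then x ⟨j.val - 1, h.2⟩
    else if h : j.val = n + 1 ∧ i.val - 1 < n then y ⟨i.val - 1, h.2⟩
    else 0

open Matrix

lemma Fin.snoc_eq_zero_iff {α : Type*} [Zero α] {n : ℕ} {x : Fin n → α} {a : α} :
    (Fin.snoc x a : Fin (n + 1) → α) = 0 ↔ x = 0 ∧ a = 0 := by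
  refine ⟨fun h => ⟨funext fun i => ?_, ?_⟩, fun ⟨hx, ha⟩ => funext fun i => ?_⟩
  · simpa using congrFun h i.castSucc
  · simpa using congrFun h (Fin.last n)
  · induction i using Fin.lastCases <;> simp [hx, ha]

lemma Fin.tail_single_succ {α : Type*} [Zero α] {n : ℕ} (i : Fin (n + 1)) (a : α) :
    Fin.tail (Pi.single i.succ a : Fin (n + 2) → α) = Pi.single i a := by
  ext j
  simp [Fin.tail, Pi.single_apply]

lemma Matrix.exists_ne_zero_mulVec_eq_zero_of_card_lt {K ι κ : Type*} [Field K] [Fintype ι]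
    [Fintype κ] (M : Matrix ι κ K) (h : Fintype.card ι < Fintype.card κ) :
    ∃ w ≠ 0, M *ᵥ w = 0 := by
  have hker : LinearMap.ker M.mulVecLin ≠ ⊥ :=
    LinearMap.ker_ne_bot_of_finrank_lt (by simpa using h)
  obtain ⟨w, hw, hw0⟩ := Submodule.exists_mem_ne_zero_of_ne_bot hker
  exact ⟨w, hw0, hw⟩

section

variable {p n : ℕ} (x y : Fin n → ZMod p) (z : ZMod p)

lemma heis_row_zero : heis p n x y z 0 = Fin.cons 1 (Fin.snoc x z) := by
  ext j
  induction j using Fin.cases with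
  | zero => simp [heis]
  | succ j =>
    induction j using Fin.lastCases with
    | last =>
      simp only [heis, of_apply, ← Fin.val_inj, Fin.val_zero, Fin.val_succ, Fin.val_last,
        Fin.cons_succ, Fin.snoc_last]
      simp
    | cast k =>
      simp only [heis, of_apply, ← Fin.val_inj, Fin.val_zero, Fin.val_succ, Fin.val_castSucc,
        Fin.cons_succ, Fin.snoc_castSucc]
      simp [k.isLt.ne]

lemma heis_row_middle (k : Fin n) :
    heis p n x y z k.castSucc.succ =
      Pi.single k.castSucc.succ 1 + Pi.single (Fin.last _) (y k) := by
  ext j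
  simp only [heis, of_apply, Pi.add_apply, Pi.single_apply, ← Fin.val_inj, Fin.val_succ,
    Fin.val_last, Fin.val_castSucc, Nat.add_one_ne_zero, false_and, dite_false]
  split_ifs <;> simp_all; omega

lemma heis_row_last : heis p n x y z (Fin.last _) = Pi.single (Fin.last _) 1 := by
  ext j
  simp only [heis, of_apply, Pi.single_apply, ← Fin.val_inj, Fin.val_last, Nat.add_one_ne_zero,
    false_and, dite_false]
  split_ifs <;> simp_all

variable (v : Fin (n + 2) → ZMod p)

lemma heis_mulVec_zero : (heis p n x y z *ᵥ v) 0 = v 0 + Fin.snoc x z ⬝ᵥ Fin.tail v := by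
  change heis p n x y z 0 ⬝ᵥ v = _
  rw [heis_row_zero, ← vecCons, cons_dotProduct, one_mul]
  rfl

lemma heis_mulVec_castSucc_succ (k : Fin n) :
    (heis p n x y z *ᵥ v) k.castSucc.succ = v k.castSucc.succ + y k * v (Fin.last _) := by
  simp only [mulVec, heis_row_middle, add_dotProduct, single_dotProduct, one_mul]

lemma heis_mulVec_last : (heis p n x y z *ᵥ v) (Fin.last _) = v (Fin.last _) := by
  simp only [mulVec, heis_row_last, single_dotProduct, one_mul]

lemma heis_mulVec_eq_self_iff :
    heis p n x y z *ᵥ v = v ↔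
      Fin.snoc x z ⬝ᵥ Fin.tail v = 0 ∧ ∀ k, y k * v (Fin.last _) = 0 := by
  rw [funext_iff, Fin.forall_fin_succ, Fin.forall_fin_succ', ← Fin.succ_last, heis_mulVec_zero]
  simp only [heis_mulVec_castSucc_succ, Fin.succ_last, heis_mulVec_last, add_eq_left, and_true]

end

lemma eq_zero_of_heis_fixes_single_succ {p n : ℕ} {x y : Fin n → ZMod p} {z : ZMod p}
    (h : ∀ j : Fin (n + 1), heis p n x y z *ᵥ Pi.single j.succ 1 = Pi.single j.succ 1) :
    x = 0 ∧ y = 0 ∧ z = 0 := by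
  simp only [heis_mulVec_eq_self_iff, Fin.tail_single_succ, dotProduct_single, mul_one] at h
  have hxz : (Fin.snoc x z : Fin (n + 1) → ZMod p) = 0 := funext fun j => (h j).1
  have hy : y = 0 := funext fun k => by simpa [← Fin.succ_last] using (h (Fin.last n)).2 k
  obtain ⟨hx, hz⟩ := Fin.snoc_eq_zero_iff.mp hxz
  exact ⟨hx, hy, hz⟩

lemma exists_ne_zero_heis_fixes {p n : ℕ} [Fact p.Prime] (v : Fin n → Fin (n + 2) → ZMod p) :
    ∃ w : Fin (n + 1) → ZMod p, w ≠ 0 ∧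
      ∀ j, heis p n (Fin.init w) 0 (w (Fin.last n)) *ᵥ v j = v j := by
  obtain ⟨w, hw0, hw⟩ :=
    (of fun j => Fin.tail (v j)).exists_ne_zero_mulVec_eq_zero_of_card_lt (by simp)
  refine ⟨w, hw0, fun j => (heis_mulVec_eq_self_iff _ _ _ _).mpr ⟨?_, fun k => zero_mul _⟩⟩
  rw [Fin.snoc_init_self, dotProduct_comm]
  exact congrFun hw j

theorem stmt17_general (p n : ℕ) [Fact p.Prime] :
    (∃ v : Fin (n + 1) → (Fin (n + 2) → ZMod p),
      ∀ (x y : Fin n → ZMod p) (z : ZMod p),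
        (∀ j : Fin (n + 1), (heis p n x y z).mulVec (v j) = v j) →
        x = 0 ∧ y = 0 ∧ z = 0) ∧
    (∀ v : Fin n → (Fin (n + 2) → ZMod p),
      ∃ (x y : Fin n → ZMod p) (z : ZMod p),
        ¬(x = 0 ∧ y = 0 ∧ z = 0) ∧
        ∀ j : Fin n, (heis p n x y z).mulVec (v j) = v j) := by
  refine ⟨⟨fun j => Pi.single j.succ 1, fun _ _ _ => eq_zero_of_heis_fixes_single_succ⟩,
    fun v => ?_⟩
  obtain ⟨w, hw0, hfix⟩ := exists_ne_zero_heis_fixes v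
  refine ⟨Fin.init w, 0, w (Fin.last n), fun ⟨hx, _, hz⟩ => hw0 ?_, hfix⟩
  rw [← Fin.snoc_init_self w]
  exact Fin.snoc_eq_zero_iff.mpr ⟨hx, hz⟩

/-- For the action of the Heisenberg group `G(p,n)` on `(ℤ/pℤ)^{n+2}`:
(1) there are `n+1` vectors whose common stabilizer is trivial (a base of size `n+1`), and
(2) no `n` vectors have trivial common stabilizer.  Hence the minimal base size — the
classical query complexity of identifying a hidden group element — is `n+1`. -/
theorem stmt17 (p n : ℕ) [Fact p.Prime] (hn : 1 ≤ n) :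
    (∃ v : Fin (n + 1) → (Fin (n + 2) → ZMod p),
      ∀ (x y : Fin n → ZMod p) (z : ZMod p),
        (∀ j : Fin (n + 1), (heis p n x y z).mulVec (v j) = v j) →
        x = 0 ∧ y = 0 ∧ z = 0) ∧
    (∀ v : Fin n → (Fin (n + 2) → ZMod p),
      ∃ (x y : Fin n → ZMod p) (z : ZMod p),
        ¬(x = 0 ∧ y = 0 ∧ z = 0) ∧
        ∀ j : Fin n, (heis p n x y z).mulVec (v j) = v j) :=
  stmt17_general p n
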